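/- arXiv:1112.2373 — 2 statements merged into one kernel-verified Lean document; each statement's English description precedes it below -/
import Mathlib

section
/- Let X be a topological space satisfying the property ⟨Ω→L⟩ for open covers: for every open ω-cover 𝒰 of X, X ∈ LI(𝒰). Then every finite power X^k also satisfies ⟨Ω→L⟩. -/
/-!
An open ω-cover `𝒰` of `X^k` is refined by the `k`-th powers of an open ω-cover `𝒱` of `X`:
given a finite `F ⊆ X`, the finite set `F^k` lies in some `U ∈ 𝒰`, and a tube-lemma argument
yields an open `V ⊇ F` with `V^k ⊆ U`. Since `(liminf Bₙ)^k = liminf Bₙ^k`, induction along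
`LI 𝒱` shows that the `k`-th power of every member of `LI 𝒱` is contained in a member of
`LI 𝒰`; applied to `X ∈ LI 𝒱` this gives `X^k ∈ LI 𝒰`.
-/

def SetLiminf {X : Type*} (B : ℕ → Set X) : Set X := ⋃ m, ⋂ n, ⋂ _ : m ≤ n, B n

inductive LI {X : Type*} (𝒰 : Set (Set X)) : Set X → Prop
  | base {U} : U ∈ 𝒰 → LI 𝒰 U
  | lim (B : ℕ → Set X) : (∀ n, LI 𝒰 (B n)) → LI 𝒰 (SetLiminf B)

/-- An ω-cover: a family of proper subsets such that every finite set is contained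
in some member (in particular it is a cover). -/
def IsOmegaCover {X : Type*} (𝒰 : Set (Set X)) : Prop :=
  (∀ U ∈ 𝒰, U ≠ Set.univ) ∧ ∀ F : Set X, F.Finite → ∃ U ∈ 𝒰, F ⊆ U

open Set

section

variable {X ι : Type*}

theorem setLiminf_mono {B C : ℕ → Set X} (h : ∀ n, B n ⊆ C n) :
    SetLiminf B ⊆ SetLiminf C :=
  iUnion_mono fun _ => iInter₂_mono fun n _ => h n

theorem pi_setLiminf [Finite ι] (B : ℕ → Set X) :
    univ.pi (fun _ : ι => SetLiminf B) = SetLiminf fun n => univ.pi fun _ : ι => B n := by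
  cases nonempty_fintype ι
  ext g
  simp only [SetLiminf, mem_univ_pi, mem_iUnion, mem_iInter]
  constructor
  · intro hg
    choose m hm using hg
    exact ⟨Finset.univ.sup m, fun n hn i => hm i n ((Finset.le_sup (Finset.mem_univ i)).trans hn)⟩
  · rintro ⟨m, hm⟩ i
    exact ⟨m, fun n hn => hm n hn i⟩

theorem LI.exists_pi_subset [Finite ι] {𝒱 : Set (Set X)} {𝒰 : Set (Set (ι → X))}
    (hrefine : ∀ V ∈ 𝒱, ∃ U ∈ 𝒰, univ.pi (fun _ => V) ⊆ U) {A : Set X} (hA : LI 𝒱 A) :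
    ∃ B, LI 𝒰 B ∧ univ.pi (fun _ => A) ⊆ B := by
  induction hA with
  | base hV => exact (hrefine _ hV).imp fun U ⟨hU, hVU⟩ => ⟨LI.base hU, hVU⟩
  | lim B _ ih =>
    choose C hC hBC using ih
    exact ⟨SetLiminf C, LI.lim C hC, (pi_setLiminf B).trans_subset (setLiminf_mono hBC)⟩

theorem exists_isOpen_pi_subset_of_finite [TopologicalSpace X] [Finite ι]
    {U : Set (ι → X)} (hU : IsOpen U) {F : Set X} (hF : F.Finite)
    (hFU : univ.pi (fun _ => F) ⊆ U) :
    ∃ V, IsOpen V ∧ F ⊆ V ∧ univ.pi (fun _ => V) ⊆ U := by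
  choose! W hW hWU using isOpen_pi_iff'.1 hU
  have hFι : (univ.pi fun _ : ι => F).Finite := Finite.pi fun _ => hF
  -- A point of `(⋃ x ∈ F, N x)^ι` lies coordinatewise in `N (x i)` for some `x ∈ F^ι`,
  -- hence in the box `univ.pi (W x) ⊆ U`.
  let N : X → Set X := fun x => ⋂ f ∈ univ.pi (fun _ : ι => F), ⋂ i ∈ {i | f i = x}, W f i
  refine ⟨⋃ x ∈ F, N x, isOpen_biUnion fun x _ => ?_, fun x hx => mem_biUnion hx ?_, ?_⟩
  · exact hFι.isOpen_biInter fun f hf =>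
      (toFinite _).isOpen_biInter fun i _ => (hW f (hFU hf) i).1
  · simp only [N, mem_iInter]
    rintro f hf i rfl
    exact (hW f (hFU hf) i).2
  · intro g hg
    simp only [mem_univ_pi, mem_iUnion] at hg
    choose x hxF hgx using hg
    have hx : x ∈ univ.pi fun _ : ι => F := mem_univ_pi.2 hxF
    refine hWU x (hFU hx) (mem_univ_pi.2 fun i => ?_)
    exact mem_iInter₂.1 (mem_iInter₂.1 (hgx i) x hx) i rfl

theorem IsOmegaCover.exists_pi_refinement [TopologicalSpace X] [Finite ι]
    {𝒰 : Set (Set (ι → X))} (hopen : ∀ U ∈ 𝒰, IsOpen U) (h𝒰 : IsOmegaCover 𝒰) :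
    ∃ 𝒱 : Set (Set X), (∀ V ∈ 𝒱, IsOpen V) ∧ IsOmegaCover 𝒱 ∧
      ∀ V ∈ 𝒱, ∃ U ∈ 𝒰, univ.pi (fun _ => V) ⊆ U := by
  refine ⟨{V | IsOpen V ∧ V ≠ univ ∧ ∃ U ∈ 𝒰, univ.pi (fun _ => V) ⊆ U},
    fun V hV => hV.1, ⟨fun V hV => hV.2.1, fun F hF => ?_⟩, fun V hV => hV.2.2⟩
  obtain ⟨U, hU, hFU⟩ := h𝒰.2 _ (Finite.pi fun _ : ι => hF)
  obtain ⟨V, hVopen, hFV, hVU⟩ := exists_isOpen_pi_subset_of_finite (hopen U hU) hF hFU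
  refine ⟨V, ⟨hVopen, ?_, U, hU, hVU⟩, hFV⟩
  rintro rfl
  exact h𝒰.1 U hU (univ_subset_iff.1 (pi_univ univ ▸ hVU))

end

theorem stmt13 {X : Type*} [TopologicalSpace X]
    (h : ∀ 𝒰 : Set (Set X), (∀ U ∈ 𝒰, IsOpen U) → IsOmegaCover 𝒰 →
      LI 𝒰 Set.univ) (k : ℕ) :
    ∀ 𝒰 : Set (Set (Fin k → X)), (∀ U ∈ 𝒰, IsOpen U) → IsOmegaCover 𝒰 →
      LI 𝒰 Set.univ := by
  intro 𝒰 hopen h𝒰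
  obtain ⟨𝒱, h𝒱open, h𝒱, hrefine⟩ := h𝒰.exists_pi_refinement hopen
  obtain ⟨B, hB, hB_univ⟩ := (h 𝒱 h𝒱open h𝒱).exists_pi_subset hrefine
  rw [pi_univ, univ_subset_iff] at hB_univ
  rwa [hB_univ] at hB
end

section
/- In C([0,1],ℝ) with the topology of pointwise convergence, let A be the set of continuous functions f : [0,1] → [0,1] such that the Lebesgue measure of f⁻¹((1/2,1]) is at most 1/2. Then the constant function 1 is in the closure of A, but 1 is not in the closure of A under partial limits of sequences. -/
open Classical in
/-- The partial limit of a sequence of partial functions: defined at `x` iff the values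
`f n x` are eventually defined and convergent, with value the limit. -/
noncomputable def partialLim {X : Type*} (f : ℕ → X → Option ℝ) : X → Option ℝ := fun x =>
  if h : (∀ᶠ n in Filter.atTop, (f n x).isSome) ∧
      ∃ y : ℝ, Filter.Tendsto (fun n => (f n x).getD 0) Filter.atTop (nhds y)
  then some h.2.choose else none

/-- The closure of a family of partial functions under partial limits of sequences. -/
inductive Partlims {X : Type*} (A : Set (X → Option ℝ)) : (X → Option ℝ) → Prop
  | base {f} : f ∈ A → Partlims A f
  | lim (f : ℕ → X → Option ℝ) : (∀ n, Partlims A (f n)) → Partlims A (partialLim f)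

/-- A total function viewed as a partial function. -/
def toPartial {X : Type*} (f : X → ℝ) : X → Option ℝ := fun x => some (f x)

/-!
The constant `1` is a pointwise limit of members of `A`: on any finite set of points it agrees
with a Urysohn function that vanishes off a neighbourhood of these points of small measure.

It is not a partial limit, because the bound `λ{g > 1/2} ≤ 1/2` survives partial limits: if
`g = lim gₙ` and `g x > 1/2`, then `gₙ x > 1/2` for all large `n`, so `{g > 1/2}` lies in the
`liminf` of the sets `{gₙ > 1/2}`, whose measure is at most the `liminf` of their measures.
But `{1 > 1/2}` is all of `[0,1]`.
-/

open MeasureTheory Metric Set Filter Topology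
open scoped ENNReal

theorem measure_liminf_le_liminf_measure {α : Type*} [MeasurableSpace α] (μ : Measure α)
    (s : ℕ → Set α) : μ (liminf s atTop) ≤ liminf (fun n => μ (s n)) atTop := by
  have hmono : Monotone fun n => ⋂ i ≥ n, s i :=
    fun _ _ hab => biInter_subset_biInter_left fun _ hi => le_trans hab hi
  rw [liminf_eq_iSup_iInf_of_nat, liminf_eq_iSup_iInf_of_nat]
  simp only [iSup_eq_iUnion, iInf_eq_iInter]
  rw [hmono.measure_iUnion]
  exact iSup_mono fun n => le_iInf₂ fun i hi => measure_mono (biInter_subset_of_mem hi)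

theorem mem_closure_of_forall_finset_exists_eqOn {ι Y : Type*} [TopologicalSpace Y]
    {A : Set (ι → Y)} {f : ι → Y} (h : ∀ I : Finset ι, ∃ g ∈ A, EqOn g f I) :
    f ∈ closure A := by
  refine mem_closure_iff.2 fun o ho hfo => ?_
  obtain ⟨I, u, hu, hIu⟩ := isOpen_pi_iff.1 ho f hfo
  obtain ⟨g, hgA, hgf⟩ := h I
  exact ⟨g, hIu fun i hi => hgf hi ▸ (hu i hi).2, hgA⟩

theorem exists_continuous_eqOn_one_measure_support_le {X : Type*} [MetricSpace X]
    [MeasurableSpace X] [OpensMeasurableSpace X] (μ : Measure X) [IsFiniteMeasure μ]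
    [NullSingletonClass μ] {t : Set X} (ht : t.Finite) {ε : ℝ≥0∞} (hε : 0 < ε) :
    ∃ g : C(X, ℝ), EqOn g 1 t ∧ (∀ x, g x ∈ Icc (0 : ℝ) 1) ∧ μ (Function.support g) ≤ ε := by
  have hthick := tendsto_measure_thickening_of_isClosed (μ := μ)
    ⟨1, one_pos, measure_ne_top _ _⟩ ht.isClosed
  rw [ht.measure_zero μ] at hthick
  obtain ⟨r, hμr, hr⟩ := ((hthick.eventually (gt_mem_nhds hε)).and self_mem_nhdsWithin).exists
  obtain ⟨g, hg0, hg1, hg01⟩ := exists_continuous_zero_one_of_isClosed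
    isOpen_thickening.isClosed_compl ht.isClosed
    (disjoint_compl_left_iff_subset.2 (self_subset_thickening hr t))
  refine ⟨g, hg1, hg01, (measure_mono ?_).trans hμr.le⟩
  exact Function.support_subset_iff'.2 fun x hx => hg0 hx

theorem tendsto_of_partialLim_eq_some {X : Type*} {f : ℕ → X → Option ℝ} {x : X} {y : ℝ}
    (h : partialLim f x = some y) :
    (∀ᶠ n in atTop, (f n x).isSome) ∧ Tendsto (fun n => (f n x).getD 0) atTop (𝓝 y) := by
  unfold partialLim at h
  split_ifs at h with hlim
  obtain rfl := Option.some_injective _ h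
  exact ⟨hlim.1, hlim.2.choose_spec⟩

def partialPreimage {X : Type*} (g : X → Option ℝ) (U : Set ℝ) : Set X :=
  {x | ∃ y ∈ g x, y ∈ U}

@[simp]
theorem partialPreimage_toPartial {X : Type*} (f : X → ℝ) (U : Set ℝ) :
    partialPreimage (toPartial f) U = f ⁻¹' U := by
  ext x
  simp [partialPreimage, toPartial]

theorem partialPreimage_partialLim_subset {X : Type*} (f : ℕ → X → Option ℝ) {U : Set ℝ}
    (hU : IsOpen U) :
    partialPreimage (partialLim f) U ⊆ liminf (fun n => partialPreimage (f n) U) atTop := by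
  rintro x ⟨y, hy, hyU⟩
  obtain ⟨hsome, hlim⟩ := tendsto_of_partialLim_eq_some hy
  rw [mem_liminf_iff_eventually_mem]
  filter_upwards [hsome, hlim.eventually (hU.mem_nhds hyU)] with n hn hnU
  obtain ⟨z, hz⟩ := Option.isSome_iff_exists.1 hn
  rw [hz, Option.getD_some] at hnU
  exact ⟨z, hz, hnU⟩

theorem Partlims.measure_partialPreimage_le {X : Type*} [MeasurableSpace X] {μ : Measure X}
    {U : Set ℝ} (hU : IsOpen U) {b : ℝ≥0∞} {A : Set (X → Option ℝ)}
    (hA : ∀ f ∈ A, μ (partialPreimage f U) ≤ b) {g : X → Option ℝ} (hg : Partlims A g) :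
    μ (partialPreimage g U) ≤ b := by
  induction hg with
  | base hf => exact hA _ hf
  | lim f _ ih =>
    calc μ (partialPreimage (partialLim f) U)
        ≤ μ (liminf (fun n => partialPreimage (f n) U) atTop) :=
          measure_mono (partialPreimage_partialLim_subset f hU)
      _ ≤ liminf (fun n => μ (partialPreimage (f n) U)) atTop :=
          measure_liminf_le_liminf_measure μ _
      _ ≤ b := liminf_le_of_frequently_le' (Frequently.of_forall ih)

theorem stmt15 :
    letI A : Set (↥(Set.Icc (0 : ℝ) 1) → ℝ) :=
      {f | Continuous f ∧ (∀ x, f x ∈ Set.Icc (0 : ℝ) 1) ∧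
        MeasureTheory.volume (f ⁻¹' Set.Ioc (1 / 2 : ℝ) 1) ≤ 1 / 2}
    (fun _ => (1 : ℝ)) ∈ closure A ∧
      ¬ Partlims (toPartial '' A) (toPartial fun _ => (1 : ℝ)) := by
  constructor
  · refine mem_closure_of_forall_finset_exists_eqOn fun I => ?_
    obtain ⟨g, hg1, hg01, hμ⟩ := exists_continuous_eqOn_one_measure_support_le volume
      I.finite_toSet (ε := 1 / 2) (by norm_num)
    refine ⟨g, ⟨g.continuous, hg01, (measure_mono ?_).trans hμ⟩, hg1⟩
    exact fun x hx => (lt_trans one_half_pos hx.1).ne'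
  · refine fun h => absurd
      (h.measure_partialPreimage_le (μ := volume) (b := 1 / 2) (isOpen_Ioi (a := 1 / 2)) ?_) ?_
    · rintro _ ⟨f, ⟨-, hf01, hf⟩, rfl⟩
      rw [partialPreimage_toPartial]
      refine (measure_mono fun x hx => ?_).trans hf
      exact ⟨hx, (hf01 x).2⟩
    · rw [partialPreimage_toPartial, preimage_const_of_mem (by norm_num), measure_univ]
      norm_num
end
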